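/- Let h : [-1,1] → [-1,1] be odd, continuous, monotonically increasing with h(1) = 1, given on (-1,1) by a convergent power series ∑_{k≥0} c_{2k+1} x^{2k+1} with c₁ > 0 and c_{2k+1} ≤ 0 for all k > 0. Then the inverse function h⁻¹ : [-1,1] → [-1,1] has a power series expansion h⁻¹(x) = ∑_{k≥0} d_{2k+1} x^{2k+1} converging on all of [-1,1] with d_{2k+1} ≥ 0 for every k ≥ 0. -/

import Mathlib

/-!
Write `h x = c₀ x - g x` with `g x = ∑ bₖ x^(2k+3)` and `bₖ = -c_(k+1) ≥ 0`; since the `bₖ` are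
nonnegative and `h` is continuous at `1`, this series for `g` also converges at `x = 1`.
For `0 ≤ x ≤ 1` and `y = h x`, the iteration `u₀ = 0`, `uₙ₊₁ = (y + g uₙ) / c₀` increases to the
unique solution `x` of `h u = y` in `[0, x]`. Unfolding the recursion writes `uₙ` as a sum of
nonnegative terms over the trees of height `< n` in which a node labelled `k` has `2k+3`
children, each leaf contributing `y / c₀` and each node `bₖ / c₀`. Hence `x` is the sum of
this nonnegative family over all trees, and grouping the trees by their number `2d+1` of
leaves gives a power series in `y` with nonnegative coefficients. Oddness of `h` handles
`x < 0`.
-/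

open Set Filter Topology

theorem HasSum.sigma_of_nonneg {α : Type*} {β : α → Type*} {f : (Σ a, β a) → ℝ} {g : α → ℝ}
    {s : ℝ} (hf0 : ∀ p, 0 ≤ f p) (hg : HasSum g s) (hf : ∀ a, HasSum (fun b => f ⟨a, b⟩) (g a)) :
    HasSum f s :=
  hg.sigma_of_hasSum hf <| (summable_sigma_of_nonneg hf0).mpr
    ⟨fun a => (hf a).summable, by simpa only [(hf _).tsum_eq] using hg.summable⟩

theorem HasSum.fin_pi_prod_of_nonneg {ι : Type*} {f : ι → ℝ} {s : ℝ} (hf : HasSum f s)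
    (hf0 : 0 ≤ f) (m : ℕ) : HasSum (fun v : Fin m → ι => ∏ j, f (v j)) (s ^ m) := by
  induction m with
  | zero => simp
  | succ m ih =>
    have hprod0 : 0 ≤ fun v : Fin m → ι => ∏ j, f (v j) := fun v =>
      Finset.prod_nonneg fun j _ => hf0 (v j)
    have hsummable := hf.summable.mul_of_nonneg ih.summable hf0 hprod0
    have hmul := hf.mul ih hsummable
    have hcons : (fun v : Fin (m + 1) → ι => ∏ j, f (v j)) =
        (fun p : ι × (Fin m → ι) => f p.1 * ∏ j, f (p.2 j)) ∘ (Fin.consEquiv fun _ => ι).symm := by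
      ext v
      simp [Fin.consEquiv, Fin.prod_univ_succ, Fin.tail]
    rw [pow_succ', hcons]
    exact (Fin.consEquiv fun _ => ι).symm.hasSum_iff.mpr hmul

theorem hasSum_of_tendsto_nhdsLT_one {b : ℕ → ℝ} (hb : ∀ k, 0 ≤ b k) (e : ℕ → ℕ) {g : ℝ → ℝ}
    {L : ℝ} (hg : ∀ t ∈ Ioo (0 : ℝ) 1, HasSum (fun k => b k * t ^ e k) (g t))
    (hL : Tendsto g (𝓝[<] 1) (𝓝 L)) : HasSum b L := by
  have hterm : ∀ t ∈ Ioo (0 : ℝ) 1, ∀ k, 0 ≤ b k * t ^ e k := fun t ht k =>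
    mul_nonneg (hb k) (pow_nonneg ht.1.le _)
  refine hasSum_of_isLUB_of_nonneg L hb ⟨?_, fun B hB => ?_⟩
  · rintro _ ⟨F, rfl⟩
    have hpoly : Tendsto (fun t : ℝ => ∑ k ∈ F, b k * t ^ e k) (𝓝[<] 1) (𝓝 (∑ k ∈ F, b k)) := by
      have hcont : Continuous fun t : ℝ => ∑ k ∈ F, b k * t ^ e k := by fun_prop
      simpa using (hcont.tendsto 1).mono_left nhdsWithin_le_nhds
    refine le_of_tendsto_of_tendsto hpoly hL ?_
    filter_upwards [Ioo_mem_nhdsLT zero_lt_one] with t ht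
    exact sum_le_hasSum F (fun k _ => hterm t ht k) (hg t ht)
  · refine le_of_tendsto hL ?_
    filter_upwards [Ioo_mem_nhdsLT zero_lt_one] with t ht
    refine hasSum_le_of_sum_le (hg t ht) fun F => le_trans ?_ (hB ⟨F, rfl⟩)
    exact Finset.sum_le_sum fun k _ => mul_le_of_le_one_right (hb k) (pow_le_one₀ ht.1.le ht.2.le)

theorem hasSum_of_monotone_exhaustion {α : Type*} {f : α → ℝ} (hf : ∀ a, 0 ≤ f a)
    {S : ℕ → Set α} (hS : Monotone S) (hcover : ∀ a, ∃ n, a ∈ S n) {u : ℕ → ℝ} {x : ℝ}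
    (hu : ∀ n, HasSum (fun a : S n => f a) (u n)) (hlim : Tendsto u atTop (𝓝 x)) :
    HasSum f x := by
  classical
  have hind : ∀ n, HasSum ((S n).indicator f) (u n) := fun n =>
    (hasSum_subtype_iff_indicator).mp (hu n)
  have hu_mono : Monotone u := fun n m hnm =>
    hasSum_le (fun a => indicator_le_indicator_of_subset (hS hnm) hf a) (hind n) (hind m)
  refine hasSum_of_isLUB_of_nonneg x hf ⟨?_, fun B hB => ?_⟩
  · rintro _ ⟨s, rfl⟩
    choose N hN using hcover
    have hsub : ∀ a ∈ s, a ∈ S (s.sup N) := fun a ha => hS (Finset.le_sup ha) (hN a)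
    calc ∑ a ∈ s, f a = ∑ a ∈ s, (S (s.sup N)).indicator f a :=
          Finset.sum_congr rfl fun a ha => (indicator_of_mem (hsub a ha) f).symm
      _ ≤ u (s.sup N) := sum_le_hasSum s (fun a _ => indicator_nonneg (fun a _ => hf a) a) (hind _)
      _ ≤ x := hu_mono.ge_of_tendsto hlim _
  · refine le_of_tendsto' hlim fun n => hasSum_le_of_sum_le (hind n) fun s => ?_
    exact (Finset.sum_le_sum fun a _ => indicator_le_self' (fun a _ => hf a) a).trans (hB ⟨s, rfl⟩)

section Iterate

variable {Φ : ℝ → ℝ} {a x : ℝ}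

theorem MonotoneOn.iterate_mem_Icc (hΦ : MonotoneOn Φ (Icc a x)) (hax : a ≤ x) (ha : a ≤ Φ a)
    (hx : Φ x = x) (n : ℕ) : Φ^[n] a ∈ Icc a x := by
  induction n with
  | zero => exact ⟨le_rfl, hax⟩
  | succ n ih =>
    rw [Function.iterate_succ_apply']
    exact ⟨ha.trans (hΦ ⟨le_rfl, hax⟩ ih ih.1), (hΦ ih ⟨hax, le_rfl⟩ ih.2).trans hx.le⟩

theorem MonotoneOn.monotone_iterate_of_le_map (hΦ : MonotoneOn Φ (Icc a x)) (hax : a ≤ x)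
    (ha : a ≤ Φ a) (hx : Φ x = x) : Monotone fun n => Φ^[n] a := by
  refine monotone_nat_of_le_succ fun n => ?_
  induction n with
  | zero => exact ha
  | succ n ih =>
    rw [Function.iterate_succ_apply', Function.iterate_succ_apply' _ (n + 1)]
    exact hΦ (hΦ.iterate_mem_Icc hax ha hx n) (hΦ.iterate_mem_Icc hax ha hx (n + 1)) ih

theorem MonotoneOn.tendsto_iterate (hΦ : MonotoneOn Φ (Icc a x)) (hcont : ContinuousOn Φ (Icc a x))
    (hax : a ≤ x) (ha : a ≤ Φ a) (hx : Φ x = x) (huniq : ∀ u ∈ Icc a x, Φ u = u → u = x) :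
    Tendsto (fun n => Φ^[n] a) atTop (𝓝 x) := by
  have hmem := hΦ.iterate_mem_Icc hax ha hx
  have hlim := tendsto_atTop_ciSup (hΦ.monotone_iterate_of_le_map hax ha hx)
    ⟨x, by rintro _ ⟨n, rfl⟩; exact (hmem n).2⟩
  set L := ⨆ n, Φ^[n] a
  have hL : L ∈ Icc a x := isClosed_Icc.mem_of_tendsto hlim (Eventually.of_forall hmem)
  have hfix : Φ L = L := by
    refine tendsto_nhds_unique ?_ ((tendsto_add_atTop_iff_nat 1).mpr hlim)
    simp only [Function.iterate_succ_apply']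
    exact (hcont L hL).tendsto.comp (tendsto_nhdsWithin_iff.mpr ⟨hlim, Eventually.of_forall hmem⟩)
  rwa [← huniq L hL hfix]

end Iterate

/-- A node labelled `k` stands for the monomial `-c (k + 1) * x ^ (2 * k + 3)` of
`c 0 * x - h x` and has `2 * k + 3` children, so a tree of degree `d` has `2 * d + 1` leaves. -/
inductive OddTree : Type
  | leaf : OddTree
  | node (k : ℕ) (children : Fin (2 * k + 3) → OddTree) : OddTree

namespace OddTree

def degree : OddTree → ℕ
  | leaf => 0
  | node k ch => k + 1 + ∑ i, degree (ch i)

noncomputable def weight (c : ℕ → ℝ) : OddTree → ℝ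
  | leaf => (c 0)⁻¹
  | node k ch => -c (k + 1) / c 0 * ∏ i, weight c (ch i)

noncomputable def term (c : ℕ → ℝ) (y : ℝ) (t : OddTree) : ℝ :=
  t.weight c * y ^ (2 * t.degree + 1)

def HeightLT : ℕ → OddTree → Prop
  | 0, _ => False
  | _ + 1, leaf => True
  | n + 1, node _ ch => ∀ i, HeightLT n (ch i)

variable {c : ℕ → ℝ} {y : ℝ}

theorem weight_nonneg (hc0 : 0 ≤ c 0) (hc : ∀ k, c (k + 1) ≤ 0) : ∀ t : OddTree, 0 ≤ t.weight c
  | leaf => inv_nonneg.mpr hc0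
  | node k ch => mul_nonneg (div_nonneg (neg_nonneg.mpr (hc k)) hc0)
      (Finset.prod_nonneg fun i _ => weight_nonneg hc0 hc (ch i))

theorem term_nonneg (hc0 : 0 ≤ c 0) (hc : ∀ k, c (k + 1) ≤ 0) (hy : 0 ≤ y) (t : OddTree) :
    0 ≤ t.term c y :=
  mul_nonneg (weight_nonneg hc0 hc t) (pow_nonneg hy _)

theorem term_leaf : leaf.term c y = y / c 0 := by
  simp [term, weight, degree, div_eq_inv_mul]

theorem term_node (k : ℕ) (ch : Fin (2 * k + 3) → OddTree) :
    (node k ch).term c y = -c (k + 1) / c 0 * ∏ i, (ch i).term c y := by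
  have hexp : 2 * (node k ch).degree + 1 = ∑ i, (2 * (ch i).degree + 1) := by
    simp only [degree, Finset.sum_add_distrib, ← Finset.mul_sum, Finset.sum_const,
      Finset.card_univ, Fintype.card_fin, smul_eq_mul, mul_one]
    ring
  simp only [term, weight, hexp, Finset.prod_mul_distrib, Finset.prod_pow_eq_pow_sum, mul_assoc]

theorem HeightLT.succ : ∀ {n : ℕ} {t : OddTree}, HeightLT n t → HeightLT (n + 1) t
  | 0, _, h => h.elim
  | _ + 1, leaf, _ => trivial
  | _ + 1, node _ _, h => fun i => (h i).succ

theorem HeightLT.mono {n m : ℕ} {t : OddTree} (hnm : n ≤ m) (h : HeightLT n t) :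
    HeightLT m t := by
  induction hnm with
  | refl => exact h
  | step _ ih => exact ih.succ

theorem exists_heightLT : ∀ t : OddTree, ∃ n, HeightLT n t
  | leaf => ⟨1, trivial⟩
  | node _ ch => by
    choose N hN using fun i => exists_heightLT (ch i)
    exact ⟨Finset.univ.sup N + 1, fun i => (hN i).mono (Finset.le_sup (Finset.mem_univ i))⟩

def heightLTSuccEquiv (n : ℕ) :
    Unit ⊕ (Σ k, Fin (2 * k + 3) → {t // HeightLT n t}) ≃ {t // HeightLT (n + 1) t} where
  toFun
    | .inl _ => ⟨leaf, trivial⟩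
    | .inr ⟨k, v⟩ => ⟨node k fun i => (v i).1, fun i => (v i).2⟩
  invFun
    | ⟨leaf, _⟩ => .inl ()
    | ⟨node k ch, h⟩ => .inr ⟨k, fun i => ⟨ch i, h i⟩⟩
  left_inv := by rintro (_ | ⟨k, v⟩) <;> rfl
  right_inv := by rintro ⟨_ | ⟨k, ch⟩, h⟩ <;> rfl

theorem hasSum_term_heightLT_succ (hc0 : 0 ≤ c 0) (hc : ∀ k, c (k + 1) ≤ 0) (hy : 0 ≤ y)
    {n : ℕ} {u G : ℝ} (hu : HasSum (fun t : {t // HeightLT n t} => t.1.term c y) u)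
    (hG : HasSum (fun k => -c (k + 1) * u ^ (2 * k + 3)) G) :
    HasSum (fun t : {t // HeightLT (n + 1) t} => t.1.term c y) ((y + G) / c 0) := by
  rw [← (heightLTSuccEquiv n).hasSum_iff, add_div]
  refine HasSum.sum ?_ ?_
  · exact term_leaf (c := c) ▸ hasSum_unique _
  · refine HasSum.sigma_of_nonneg (fun _ => term_nonneg hc0 hc hy _) (hG.div_const (c 0))
      fun k => ?_
    have hprod := (hu.fin_pi_prod_of_nonneg (fun t => term_nonneg hc0 hc hy t.1)
      (2 * k + 3)).mul_left (-c (k + 1) / c 0)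
    simpa [heightLTSuccEquiv, term_node, div_mul_eq_mul_div] using hprod

end OddTree

open OddTree

noncomputable def inverseCoeff (c : ℕ → ℝ) (k : ℕ) : ℝ :=
  ∑' t : degree ⁻¹' {k}, t.1.weight c

theorem hasSum_inverseCoeff {c : ℕ → ℝ} {x y : ℝ}
    (hx : HasSum (fun t : OddTree => t.term c y) x) :
    HasSum (fun k => inverseCoeff c k * y ^ (2 * k + 1)) x := by
  have hfiber : ∀ k, ∑' t : degree ⁻¹' {k}, t.1.term c y = inverseCoeff c k * y ^ (2 * k + 1) :=
    fun k => by
      rw [inverseCoeff, ← tsum_mul_right]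
      exact tsum_congr fun t => by rw [term, show t.1.degree = k from t.2]
  simpa only [hfiber] using hx.tsum_fiberwise degree

section InverseOfOddSeries

variable {h : ℝ → ℝ} {c : ℕ → ℝ}

theorem hasSum_tail_of_mem_Icc (hcont : ContinuousOn h (Icc (-1) 1))
    (hsum : ∀ x ∈ Ioo (-1 : ℝ) 1, HasSum (fun k => c k * x ^ (2 * k + 1)) (h x))
    (hc : ∀ k, c (k + 1) ≤ 0) {s : ℝ} (hs : s ∈ Icc (0 : ℝ) 1) :
    HasSum (fun k => -c (k + 1) * s ^ (2 * k + 3)) (c 0 * s - h s) := by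
  have hIoo : ∀ t ∈ Ioo (-1 : ℝ) 1,
      HasSum (fun k => -c (k + 1) * t ^ (2 * k + 3)) (c 0 * t - h t) := fun t ht => by
    have hshift := ((hasSum_nat_add_iff' 1).mpr (hsum t ht)).mul_left (-1)
    rw [Finset.sum_range_one] at hshift
    have hterm : (fun k => -c (k + 1) * t ^ (2 * k + 3)) =
        fun k => -1 * (c (k + 1) * t ^ (2 * (k + 1) + 1)) := by
      ext k
      ring
    rwa [hterm, show c 0 * t - h t = -1 * (h t - c 0 * t ^ (2 * 0 + 1)) by ring]
  rcases hs.2.lt_or_eq with hs1 | rfl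
  · exact hIoo s ⟨by linarith [hs.1], hs1⟩
  have hlim : Tendsto (fun t => c 0 * t - h t) (𝓝[<] 1) (𝓝 (c 0 * 1 - h 1)) :=
    ((continuous_const.mul continuous_id).continuousWithinAt.sub
      (hcont 1 ⟨by norm_num, le_rfl⟩)).tendsto.mono_left
      (nhdsWithin_le_of_mem (Icc_mem_nhdsLT (by norm_num)))
  simpa using hasSum_of_tendsto_nhdsLT_one (fun k => neg_nonneg.mpr (hc k)) (fun k => 2 * k + 3)
    (fun t ht => hIoo t ⟨by linarith [ht.1], ht.2⟩) hlim

theorem monotoneOn_mul_sub_of_hasSum_tail (hc : ∀ k, c (k + 1) ≤ 0)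
    (htail : ∀ s ∈ Icc (0 : ℝ) 1, HasSum (fun k => -c (k + 1) * s ^ (2 * k + 3)) (c 0 * s - h s)) :
    MonotoneOn (fun s => c 0 * s - h s) (Icc 0 1) := fun s hs s' hs' hss =>
  hasSum_le (fun k => mul_le_mul_of_nonneg_left (pow_le_pow_left₀ hs.1 hss _)
    (neg_nonneg.mpr (hc k))) (htail s hs) (htail s' hs')

theorem hasSum_term_inverse (hc0 : 0 < c 0) (hc : ∀ k, c (k + 1) ≤ 0)
    (hcont : ContinuousOn h (Icc (-1) 1)) (hmono : StrictMonoOn h (Icc (-1) 1)) (h0 : h 0 = 0)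
    (htail : ∀ s ∈ Icc (0 : ℝ) 1, HasSum (fun k => -c (k + 1) * s ^ (2 * k + 3)) (c 0 * s - h s))
    {x : ℝ} (hx : x ∈ Icc (0 : ℝ) 1) :
    HasSum (fun t : OddTree => t.term c (h x)) x := by
  have hIcc : Icc 0 x ⊆ Icc (-1 : ℝ) 1 := Icc_subset_Icc (by norm_num) hx.2
  have hIcc' : Icc 0 x ⊆ Icc (0 : ℝ) 1 := Icc_subset_Icc le_rfl hx.2
  have hy : 0 ≤ h x :=
    h0 ▸ hmono.monotoneOn (hIcc (left_mem_Icc.2 hx.1)) (hIcc (right_mem_Icc.2 hx.1)) hx.1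
  set Φ : ℝ → ℝ := fun u => (h x + (c 0 * u - h u)) / c 0
  have hΦmono : MonotoneOn Φ (Icc 0 x) := fun s hs s' hs' hss =>
    div_le_div_of_nonneg_right (add_le_add le_rfl
      (monotoneOn_mul_sub_of_hasSum_tail hc htail (hIcc' hs) (hIcc' hs') hss)) hc0.le
  have hΦcont : ContinuousOn Φ (Icc 0 x) :=
    ((continuousOn_const.add ((continuous_const.mul continuous_id).continuousOn.sub
      (hcont.mono hIcc))).div_const _)
  have hΦ0 : 0 ≤ Φ 0 := by simpa [Φ, h0] using div_nonneg hy hc0.le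
  have hΦx : Φ x = x := by
    rw [show Φ x = (h x + (c 0 * x - h x)) / c 0 from rfl, add_sub_cancel,
      mul_div_cancel_left₀ _ hc0.ne']
  have huniq : ∀ u ∈ Icc 0 x, Φ u = u → u = x := fun u hu hfix =>
    hmono.injOn (hIcc hu) (hIcc (right_mem_Icc.2 hx.1))
      (by linarith [(div_eq_iff hc0.ne').mp hfix])
  have hiter : ∀ n, HasSum (fun t : {t // HeightLT n t} => t.1.term c (h x)) (Φ^[n] 0) := by
    intro n
    induction n with
    | zero =>
      have : IsEmpty {t // HeightLT 0 t} := ⟨fun t => t.2⟩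
      exact hasSum_empty
    | succ n ih =>
      rw [Function.iterate_succ_apply']
      exact hasSum_term_heightLT_succ hc0.le hc hy ih
        (htail _ (hIcc' (hΦmono.iterate_mem_Icc hx.1 hΦ0 hΦx n)))
  exact hasSum_of_monotone_exhaustion (S := fun n => {t | HeightLT n t})
    (term_nonneg hc0.le hc hy) (fun n m hnm t ht => HeightLT.mono hnm ht) exists_heightLT hiter
    (hΦmono.tendsto_iterate hΦcont hx.1 hΦ0 hΦx huniq)

end InverseOfOddSeries

theorem stmt_8 (h : ℝ → ℝ) (c : ℕ → ℝ)
    (hodd : ∀ x ∈ Icc (-1 : ℝ) 1, h (-x) = -h x)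
    (hcont : ContinuousOn h (Icc (-1 : ℝ) 1))
    (hmono : StrictMonoOn h (Icc (-1 : ℝ) 1))
    (hsum : ∀ x ∈ Ioo (-1 : ℝ) 1, HasSum (fun k : ℕ => c k * x ^ (2 * k + 1)) (h x))
    (hc0 : 0 < c 0) (hc : ∀ k : ℕ, 0 < k → c k ≤ 0) :
    ∃ d : ℕ → ℝ, (∀ k, 0 ≤ d k) ∧
      ∀ x ∈ Icc (-1 : ℝ) 1, HasSum (fun k : ℕ => d k * (h x) ^ (2 * k + 1)) x := by
  have hc' : ∀ k, c (k + 1) ≤ 0 := fun k => hc (k + 1) k.succ_pos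
  have h0 : h 0 = 0 := by linarith [neg_zero (G := ℝ) ▸ hodd 0 (by norm_num)]
  have hpos : ∀ x ∈ Icc (0 : ℝ) 1,
      HasSum (fun k => inverseCoeff c k * h x ^ (2 * k + 1)) x := fun x hx =>
    hasSum_inverseCoeff <| hasSum_term_inverse hc0 hc' hcont hmono h0
      (fun s hs => hasSum_tail_of_mem_Icc hcont hsum hc' hs) hx
  refine ⟨inverseCoeff c, fun k => tsum_nonneg fun t => weight_nonneg hc0.le hc' _, ?_⟩
  intro x hx
  rcases le_total 0 x with hx0 | hx0
  · exact hpos x ⟨hx0, hx.2⟩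
  · have hhx : h x = -h (-x) := by
      simpa using hodd (-x) ⟨by linarith [hx.2], by linarith [hx.1]⟩
    simpa [hhx, (odd_two_mul_add_one _).neg_pow] using
      (hpos (-x) ⟨by linarith, by linarith [hx.1]⟩).neg
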